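/- arXiv:2009.12940 — 5 statements merged into one kernel-verified Lean document; each statement's English description precedes it below -/
import Mathlib

section
/- For nonzero x, x̃ ∈ ℝ³, the Frobenius inner product satisfies ⟨⟨σ(x), σ(x̃)⟩⟩ = |x|^{1+γ/2}|x̃|^{1+γ/2}(1 + (x·x̃)²/(|x|²|x̃|²)), and consequently ⟨⟨σ(x), σ(x̃)⟩⟩ ≥ 2|x|^{γ/2}|x̃|^{γ/2}(x·x̃). -/
noncomputable def norm3 (x : Fin 3 → ℝ) : ℝ := Real.sqrt (∑ i, (x i)^2)

noncomputable def dot3 (x y : Fin 3 → ℝ) : ℝ := ∑ i, x i * y i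

noncomputable def projM (x : Fin 3 → ℝ) : Matrix (Fin 3) (Fin 3) ℝ :=
  1 - (norm3 x ^ 2)⁻¹ • Matrix.of (fun i j => x i * x j)

noncomputable def sigmaM (γ : ℝ) (x : Fin 3 → ℝ) : Matrix (Fin 3) (Fin 3) ℝ :=
  norm3 x ^ (1 + γ/2) • projM x

noncomputable def frob2 (A : Matrix (Fin 3) (Fin 3) ℝ) : ℝ := Matrix.trace (A * A.transpose)

noncomputable def minner (A B : Matrix (Fin 3) (Fin 3) ℝ) : ℝ := Matrix.trace (A * B.transpose)

noncomputable def bfun (γ : ℝ) (x : Fin 3 → ℝ) : Fin 3 → ℝ := (-2 * norm3 x ^ γ) • x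

/-! `σ(x) = |x|^{1+γ/2} P_x` with `P_x` the orthogonal projection onto `x^⊥`, so by bilinearity
everything reduces to `⟨⟨P_x, P_y⟩⟩ = Tr(P_x P_y) = 3 - 1 - 1 + cos² θ`, `θ` the angle between
`x` and `y`. The inequality is then `1 + c² ≥ 2c` for `c = cos θ`, rescaled by `|x| |y|`. -/

lemma norm3_sq (x : Fin 3 → ℝ) : norm3 x ^ 2 = ∑ i, x i ^ 2 :=
  Real.sq_sqrt (Finset.sum_nonneg fun i _ => sq_nonneg (x i))

lemma norm3_pos {x : Fin 3 → ℝ} (hx : x ≠ 0) : 0 < norm3 x := by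
  obtain ⟨i, hi⟩ := Function.ne_iff.1 hx
  exact Real.sqrt_pos.2 <| (sq_pos_of_ne_zero hi).trans_le <|
    Finset.single_le_sum (fun j _ => sq_nonneg (x j)) (Finset.mem_univ i)

lemma minner_eq_sum (A B : Matrix (Fin 3) (Fin 3) ℝ) :
    minner A B = ∑ i, ∑ j, A i j * B i j := by
  simp [minner, Matrix.trace, Matrix.mul_apply, Matrix.diag]

lemma minner_smul_smul (a b : ℝ) (A B : Matrix (Fin 3) (Fin 3) ℝ) :
    minner (a • A) (b • B) = a * b * minner A B := by
  simp only [minner, Matrix.transpose_smul, Matrix.smul_mul, Matrix.mul_smul,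
    Matrix.trace_smul, smul_eq_mul]
  ring

lemma minner_projM {x y : Fin 3 → ℝ} (hx : x ≠ 0) (hy : y ≠ 0) :
    minner (projM x) (projM y) = 1 + dot3 x y ^ 2 / (norm3 x ^ 2 * norm3 y ^ 2) := by
  have hx' : ∑ i, x i ^ 2 ≠ 0 := norm3_sq x ▸ (pow_pos (norm3_pos hx) 2).ne'
  have hy' : ∑ i, y i ^ 2 ≠ 0 := norm3_sq y ▸ (pow_pos (norm3_pos hy) 2).ne'
  simp only [Fin.sum_univ_three] at hx' hy'
  simp only [minner_eq_sum, projM, norm3_sq, dot3, Matrix.sub_apply, Matrix.one_apply,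
    Matrix.smul_apply, Matrix.of_apply, smul_eq_mul, Fin.sum_univ_three]
  norm_num [Fin.ext_iff]
  field_simp
  ring

lemma minner_sigmaM (γ : ℝ) {x y : Fin 3 → ℝ} (hx : x ≠ 0) (hy : y ≠ 0) :
    minner (sigmaM γ x) (sigmaM γ y)
      = norm3 x ^ (1 + γ/2) * norm3 y ^ (1 + γ/2)
        * (1 + dot3 x y ^ 2 / (norm3 x ^ 2 * norm3 y ^ 2)) := by
  rw [sigmaM, sigmaM, minner_smul_smul, minner_projM hx hy]

lemma two_mul_le_mul_one_add_sq_div_sq {c : ℝ} (hc : 0 < c) (d : ℝ) :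
    2 * d ≤ c * (1 + d ^ 2 / c ^ 2) := by
  have h : c * (1 + d ^ 2 / c ^ 2) - 2 * d = (c - d) ^ 2 / c := by
    field_simp
    ring
  linarith [div_nonneg (sq_nonneg (c - d)) hc.le]

theorem stmt1_general (γ : ℝ) (x y : Fin 3 → ℝ) (hx : x ≠ 0) (hy : y ≠ 0) :
    minner (sigmaM γ x) (sigmaM γ y)
      = norm3 x ^ (1 + γ/2) * norm3 y ^ (1 + γ/2)
        * (1 + (dot3 x y)^2 / (norm3 x ^ 2 * norm3 y ^ 2))
    ∧ 2 * norm3 x ^ (γ/2) * norm3 y ^ (γ/2) * dot3 x y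
        ≤ minner (sigmaM γ x) (sigmaM γ y) := by
  refine ⟨minner_sigmaM γ hx hy, minner_sigmaM γ hx hy ▸ ?_⟩
  have ha := norm3_pos hx
  have hb := norm3_pos hy
  calc 2 * norm3 x ^ (γ/2) * norm3 y ^ (γ/2) * dot3 x y
      = norm3 x ^ (γ/2) * norm3 y ^ (γ/2) * (2 * dot3 x y) := by ring
    _ ≤ norm3 x ^ (γ/2) * norm3 y ^ (γ/2)
          * (norm3 x * norm3 y * (1 + dot3 x y ^ 2 / (norm3 x * norm3 y) ^ 2)) := by
        have := two_mul_le_mul_one_add_sq_div_sq (mul_pos ha hb) (dot3 x y)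
        gcongr
    _ = norm3 x ^ (1 + γ/2) * norm3 y ^ (1 + γ/2)
          * (1 + dot3 x y ^ 2 / (norm3 x ^ 2 * norm3 y ^ 2)) := by
        rw [Real.rpow_add ha, Real.rpow_add hb, Real.rpow_one, Real.rpow_one]
        ring

theorem stmt1 (γ : ℝ) (hγ : γ ∈ Set.Ioc (0:ℝ) 1) (x y : Fin 3 → ℝ) (hx : x ≠ 0) (hy : y ≠ 0) :
    minner (sigmaM γ x) (sigmaM γ y)
      = norm3 x ^ (1 + γ/2) * norm3 y ^ (1 + γ/2)
        * (1 + (dot3 x y)^2 / (norm3 x ^ 2 * norm3 y ^ 2))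
    ∧ 2 * norm3 x ^ (γ/2) * norm3 y ^ (γ/2) * dot3 x y
        ≤ minner (sigmaM γ x) (sigmaM γ y) :=
  stmt1_general γ x y hx hy
end

section
/- For nonzero x, x̃ ∈ ℝ³, one has ‖σ(x) - σ(x̃)‖² ≤ 2(|x|^{γ/2} + |x̃|^{γ/2})² |x - x̃|². -/
lemma abs_dot3_le (x y : Fin 3 → ℝ) : |dot3 x y| ≤ norm3 x * norm3 y := by
  refine abs_le_of_sq_le_sq ?_ (by unfold norm3; positivity)
  rw [mul_pow, norm3_sq, norm3_sq]
  exact Finset.sum_mul_sq_le_sq_mul_sq _ _ _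

lemma norm3_sub_sq_eq {x y : Fin 3 → ℝ} (hx : x ≠ 0) (hy : y ≠ 0) :
    norm3 (x - y) ^ 2 = (norm3 x - norm3 y) ^ 2
      + 2 * (norm3 x * norm3 y) * (1 - dot3 x y / (norm3 x * norm3 y)) := by
  have hu := (norm3_pos hx).ne'
  have hv := (norm3_pos hy).ne'
  have hcos : norm3 (x - y) ^ 2 = norm3 x ^ 2 + norm3 y ^ 2 - 2 * dot3 x y := by
    simp only [norm3_sq, dot3, Fin.sum_univ_three, Pi.sub_apply]
    ring
  rw [hcos]
  field_simp
  ring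

lemma frob2_smul_projM_sub_smul_projM (a b : ℝ) {x y : Fin 3 → ℝ} (hx : x ≠ 0) (hy : y ≠ 0) :
    frob2 (a • projM x - b • projM y)
      = 2 * (a - b) ^ 2 + 2 * a * b * (1 - (dot3 x y / (norm3 x * norm3 y)) ^ 2) := by
  have hu := (pow_pos (norm3_pos hx) 2).ne'
  have hv := (pow_pos (norm3_pos hy) 2).ne'
  rw [div_pow, mul_pow]
  simp only [frob2, projM, dot3, Matrix.trace, norm3_sq, Fin.sum_univ_three] at hu hv ⊢
  simp only [Matrix.smul_of, Matrix.transpose_sub, Matrix.transpose_smul,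
    Matrix.transpose_one, Matrix.diag_apply, Matrix.mul_apply, Matrix.sub_apply, Matrix.smul_apply,
    Matrix.one_apply, Matrix.of_apply, Pi.smul_apply, smul_eq_mul, Matrix.transpose_apply,
    Fin.sum_univ_three, Fin.isValue, Fin.reduceEq, ↓reduceIte]
  field_simp
  ring

lemma abs_rpow_one_add_sub_le {α : ℝ} (hα₀ : 0 ≤ α) (hα₁ : α ≤ 1) {u v : ℝ} (hu : 0 < u)
    (hv : 0 < v) : |u ^ (1 + α) - v ^ (1 + α)| ≤ (u ^ α + v ^ α) * |u - v| := by
  wlog hvu : v ≤ u generalizing u v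
  · rw [abs_sub_comm, abs_sub_comm u, add_comm (u ^ α)]
    exact this hv hu (le_of_not_ge hvu)
  rw [Real.rpow_add hu, Real.rpow_add hv, Real.rpow_one, Real.rpow_one,
    abs_of_nonneg (sub_nonneg.2 hvu)]
  have hmono : v ^ α ≤ u ^ α := Real.rpow_le_rpow hv.le hvu hα₀
  -- `t ↦ t ^ (α - 1)` is antitone since `α ≤ 1`
  have hcross : u ^ α * v ≤ v ^ α * u := by
    have h := Real.rpow_le_rpow_of_nonpos hv hvu (sub_nonpos.2 hα₁)
    rwa [Real.rpow_sub_one hu.ne', Real.rpow_sub_one hv.ne', div_le_div_iff₀ hu hv] at h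
  rw [abs_of_nonneg (by nlinarith [Real.rpow_nonneg hv.le α])]
  linear_combination hcross

lemma sq_rpow_sub_add_angular_le {α u v c : ℝ} (hα₀ : 0 ≤ α) (hα₁ : α ≤ 1) (hu : 0 < u)
    (hv : 0 < v) (hc : |c| ≤ 1) :
    2 * (u ^ (1 + α) - v ^ (1 + α)) ^ 2 + 2 * u ^ (1 + α) * v ^ (1 + α) * (1 - c ^ 2)
      ≤ 2 * (u ^ α + v ^ α) ^ 2 * ((u - v) ^ 2 + 2 * (u * v) * (1 - c)) := by
  have hp := Real.rpow_pos_of_pos hu α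
  have hq := Real.rpow_pos_of_pos hv α
  have hradial : (u ^ (1 + α) - v ^ (1 + α)) ^ 2 ≤ (u ^ α + v ^ α) ^ 2 * (u - v) ^ 2 := by
    rw [← sq_abs, ← sq_abs (u - v), ← mul_pow]
    exact pow_le_pow_left₀ (abs_nonneg _) (abs_rpow_one_add_sub_le hα₀ hα₁ hu hv) 2
  have hangular : u ^ α * v ^ α * (1 - c ^ 2) ≤ 2 * (u ^ α + v ^ α) ^ 2 * (1 - c) := by
    obtain ⟨hc₁, hc₂⟩ := abs_le.1 hc
    have : 0 ≤ 2 * (u ^ α + v ^ α) ^ 2 - u ^ α * v ^ α * (1 + c) := by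
      nlinarith [mul_pos hp hq, sq_nonneg (u ^ α), sq_nonneg (v ^ α)]
    nlinarith [mul_nonneg (sub_nonneg.2 hc₂) this]
  have hprod : u ^ (1 + α) * v ^ (1 + α) = u ^ α * v ^ α * (u * v) := by
    rw [Real.rpow_add hu, Real.rpow_add hv, Real.rpow_one, Real.rpow_one]
    ring
  rw [mul_assoc 2, hprod]
  linear_combination 2 * hradial + 2 * mul_le_mul_of_nonneg_right hangular (mul_pos hu hv).le

theorem stmt5 (γ : ℝ) (hγ : γ ∈ Set.Ioc (0:ℝ) 1) (x y : Fin 3 → ℝ) (hx : x ≠ 0) (hy : y ≠ 0) :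
    frob2 (sigmaM γ x - sigmaM γ y)
      ≤ 2 * (norm3 x ^ (γ/2) + norm3 y ^ (γ/2))^2 * norm3 (x - y) ^ 2 := by
  have hc : |dot3 x y / (norm3 x * norm3 y)| ≤ 1 := by
    have huv := mul_pos (norm3_pos hx) (norm3_pos hy)
    rw [abs_div, abs_of_pos huv]
    exact div_le_one_of_le₀ (abs_dot3_le x y) huv.le
  rw [sigmaM, sigmaM, frob2_smul_projM_sub_smul_projM _ _ hx hy, norm3_sub_sq_eq hx hy]
  exact sq_rpow_sub_add_angular_le (by linarith [hγ.1]) (by linarith [hγ.2])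
    (norm3_pos hx) (norm3_pos hy) hc
end

section
/- For each p > 0 and ε ≥ 0 there exists a constant C > 0 such that for all v, w, y ∈ ℝ³: c_{p,ε}(v,y) ≤ C(c_{p,ε}(v,w) + c_{p,ε}(w,y)), where c_{p,ε}(v,ṽ) = (1 + |v|^p + |ṽ|^p)·φ_ε(|v - ṽ|²) and φ_ε(r) = r/(1+εr). -/
noncomputable def cost (p ε : ℝ) (v w : Fin 3 → ℝ) : ℝ :=
  (1 + norm3 v ^ p + norm3 w ^ p) * (norm3 (v - w) ^ 2 / (1 + ε * norm3 (v - w) ^ 2))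

/-!
By symmetry of the cost we may assume |w - y| ≤ |v - w|. Then |v - y| ≤ 2|v - w|, and since
φ_ε(r) = r / (1 + εr) satisfies φ_ε(s) ≤ k φ_ε(r) whenever s ≤ k r and k ≥ 1, the factor
φ_ε(|v - y|²) is at most 4 φ_ε(|v - w|²). Moreover |y| ≤ |v| + 2|w| ≤ 3 max(|v|, |w|), so
|y|^p ≤ 3^p (|v|^p + |w|^p) and the weight 1 + |v|^p + |y|^p is at most (1 + 3^p) times
1 + |v|^p + |w|^p. Hence C = 4 (1 + 3^p) works.
-/

open Real

lemma rpow_le_mul_rpow_add_rpow_of_le_mul_max {a b c k p : ℝ} (ha : 0 ≤ a) (hb : 0 ≤ b)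
    (hc : 0 ≤ c) (hk : 0 ≤ k) (hp : 0 ≤ p) (h : c ≤ k * max a b) :
    c ^ p ≤ k ^ p * (a ^ p + b ^ p) := calc
  c ^ p ≤ (k * max a b) ^ p := rpow_le_rpow hc h hp
  _ = k ^ p * max (a ^ p) (b ^ p) := by rw [mul_rpow hk (le_max_of_le_left ha), rpow_max ha hb hp]
  _ ≤ k ^ p * (a ^ p + b ^ p) := by
    gcongr; exact max_le_add_of_nonneg (rpow_nonneg ha p) (rpow_nonneg hb p)

noncomputable def saturation (ε r : ℝ) : ℝ := r / (1 + ε * r)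

section Saturation

variable {ε r s k : ℝ}

lemma saturation_nonneg (hε : 0 ≤ ε) (hr : 0 ≤ r) : 0 ≤ saturation ε r := by
  unfold saturation; positivity

lemma saturation_le_mul_saturation (hε : 0 ≤ ε) (hr : 0 ≤ r) (hs : 0 ≤ s) (hk : 1 ≤ k)
    (h : s ≤ k * r) : saturation ε s ≤ k * saturation ε r := by
  unfold saturation
  rw [mul_div_assoc', div_le_div_iff₀ (by positivity) (by positivity)]
  nlinarith [mul_le_mul_of_nonneg_left hk (mul_nonneg (mul_nonneg hε hr) hs)]

end Saturation

noncomputable def weightedCost {E : Type*} [SeminormedAddCommGroup E] (p ε : ℝ) (v w : E) : ℝ :=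
  (1 + ‖v‖ ^ p + ‖w‖ ^ p) * saturation ε (‖v - w‖ ^ 2)

section WeightedCost

variable {E : Type*} [SeminormedAddCommGroup E] {p ε : ℝ}

lemma weightedCost_comm (v w : E) : weightedCost p ε v w = weightedCost p ε w v := by
  unfold weightedCost; rw [norm_sub_rev]; ring

lemma weightedCost_nonneg (hε : 0 ≤ ε) (v w : E) : 0 ≤ weightedCost p ε v w :=
  mul_nonneg (by positivity) (saturation_nonneg hε (by positivity))

lemma weightedCost_le_of_norm_sub_le (hp : 0 ≤ p) (hε : 0 ≤ ε) {v w y : E}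
    (h : ‖w - y‖ ≤ ‖v - w‖) :
    weightedCost p ε v y ≤ (4 * (1 + 3 ^ p)) * weightedCost p ε v w := by
  have hvy : ‖v - y‖ ≤ 2 * ‖v - w‖ := by
    linarith [norm_sub_le_norm_sub_add_norm_sub v w y]
  have hy : ‖y‖ ≤ 3 * max ‖v‖ ‖w‖ := by
    linarith [norm_le_norm_add_norm_sub' y w, norm_sub_rev w y, norm_sub_le v w,
      le_max_left ‖v‖ ‖w‖, le_max_right ‖v‖ ‖w‖]
  have hweight : 1 + ‖v‖ ^ p + ‖y‖ ^ p ≤ (1 + 3 ^ p) * (1 + ‖v‖ ^ p + ‖w‖ ^ p) := by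
    have := rpow_le_mul_rpow_add_rpow_of_le_mul_max (norm_nonneg v) (norm_nonneg w)
      (norm_nonneg y) (by norm_num) hp hy
    nlinarith [rpow_nonneg (norm_nonneg v) p, rpow_nonneg (norm_nonneg w) p,
      rpow_nonneg (by norm_num : (0:ℝ) ≤ 3) p]
  have hsat : saturation ε (‖v - y‖ ^ 2) ≤ 4 * saturation ε (‖v - w‖ ^ 2) :=
    saturation_le_mul_saturation hε (by positivity) (by positivity) (by norm_num)
      (by nlinarith [norm_nonneg (v - y)])
  calc weightedCost p ε v y
      ≤ ((1 + 3 ^ p) * (1 + ‖v‖ ^ p + ‖w‖ ^ p)) * (4 * saturation ε (‖v - w‖ ^ 2)) :=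
        mul_le_mul hweight hsat (saturation_nonneg hε (by positivity)) (by positivity)
    _ = (4 * (1 + 3 ^ p)) * weightedCost p ε v w := by unfold weightedCost; ring

lemma weightedCost_le_mul_add (hp : 0 ≤ p) (hε : 0 ≤ ε) (v w y : E) :
    weightedCost p ε v y ≤ (4 * (1 + 3 ^ p)) * (weightedCost p ε v w + weightedCost p ε w y) := by
  rcases le_total ‖w - y‖ ‖v - w‖ with h | h
  · calc weightedCost p ε v y ≤ (4 * (1 + 3 ^ p)) * weightedCost p ε v w :=
          weightedCost_le_of_norm_sub_le hp hε h
      _ ≤ _ := by gcongr; exact le_add_of_nonneg_right (weightedCost_nonneg hε w y)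
  · rw [norm_sub_rev w y, norm_sub_rev v w] at h
    calc weightedCost p ε v y = weightedCost p ε y v := weightedCost_comm v y
      _ ≤ (4 * (1 + 3 ^ p)) * weightedCost p ε y w := weightedCost_le_of_norm_sub_le hp hε h
      _ ≤ _ := by
        rw [weightedCost_comm y w]; gcongr
        exact le_add_of_nonneg_left (weightedCost_nonneg hε v w)

end WeightedCost

lemma norm3_eq_norm_toLp (x : Fin 3 → ℝ) : norm3 x = ‖WithLp.toLp 2 x‖ := by
  simp [norm3, EuclideanSpace.norm_eq, sq_abs]

lemma cost_eq_weightedCost (p ε : ℝ) (v w : Fin 3 → ℝ) :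
    cost p ε v w = weightedCost p ε (WithLp.toLp 2 v) (WithLp.toLp 2 w) := by
  simp only [cost, weightedCost, saturation, norm3_eq_norm_toLp, WithLp.toLp_sub]

theorem stmt9 (p ε : ℝ) (hp : 0 < p) (hε : 0 ≤ ε) :
    ∃ C > (0:ℝ), ∀ v w y : Fin 3 → ℝ,
      cost p ε v y ≤ C * (cost p ε v w + cost p ε w y) := by
  refine ⟨4 * (1 + 3 ^ p), by positivity, fun v w y => ?_⟩
  simpa only [cost_eq_weightedCost] using weightedCost_le_mul_add hp.le hε _ _ _
end

section
/- Let u : (0,∞) → (0,∞) be C¹ and suppose there are constants a, b, c, α, β > 0 such that u'(t) ≤ -a·u(t)^{1+α} + b·u(t) + c·u(t)^{1-β} for all t > 0. Then for all t > 0, u(t) ≤ (2/(aαt))^{1/α} + (4b/a)^{1/α} + (4c/a)^{1/(α+β)}. -/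
/-!
Once `u ≥ M := (4b/a)^(1/α) + (4c/a)^(1/(α+β))`, each lower-order term on the right-hand side is at
most `(a/4) u^(1+α)`, so `u' ≤ -(a/2) u^(1+α)` there. The solution `(aα(t - ε)/2)^(-1/α)` of
`y' = -(a/2) y^(1+α)` blows up at `ε`, and shifted up by `M` it becomes a strict upper barrier for `u`
on `(ε, ∞)`. Letting `ε → 0` gives the bound.
-/

open Real Set Filter Topology

noncomputable def blowUpSolution (k α ε s : ℝ) : ℝ := (k * α * (s - ε)) ^ (-α⁻¹)

section BlowUpSolution

variable {k α ε s : ℝ}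

lemma blowUpSolution_pos (hk : 0 < k) (hα : 0 < α) (hs : ε < s) : 0 < blowUpSolution k α ε s :=
  rpow_pos_of_pos (by have := sub_pos.2 hs; positivity) _

lemma hasDerivAt_blowUpSolution (hk : 0 < k) (hα : 0 < α) (hs : ε < s) :
    HasDerivAt (blowUpSolution k α ε) (-k * blowUpSolution k α ε s ^ (1 + α)) s := by
  have hbase : 0 < k * α * (s - ε) := by have := sub_pos.2 hs; positivity
  have hlin : HasDerivAt (fun s => k * α * (s - ε)) (k * α) s := by
    simpa using ((hasDerivAt_id s).sub_const ε).const_mul (k * α)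
  refine (hlin.rpow_const (p := -α⁻¹) (Or.inl hbase.ne')).congr_deriv ?_
  have hexp : -α⁻¹ * (1 + α) = -α⁻¹ - 1 := by field_simp; ring
  rw [blowUpSolution, ← rpow_mul hbase.le, hexp]
  field_simp

lemma tendsto_blowUpSolution_atTop (hk : 0 < k) (hα : 0 < α) :
    Tendsto (blowUpSolution k α ε) (𝓝[>] ε) atTop := by
  have hlin : Tendsto (fun s => k * α * (s - ε)) (𝓝[>] ε) (𝓝[>] 0) := by
    refine tendsto_nhdsWithin_of_tendsto_nhds_of_eventually_within _ ?_ ?_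
    · have : Continuous (fun s => k * α * (s - ε)) := by fun_prop
      simpa using (this.tendsto ε).mono_left nhdsWithin_le_nhds
    · filter_upwards [self_mem_nhdsWithin] with s (hs : ε < s)
      have := sub_pos.2 hs
      exact mem_Ioi.2 (by positivity)
  exact (tendsto_rpow_neg_nhdsGT_zero (neg_neg_of_pos (inv_pos.2 hα))).comp hlin

end BlowUpSolution

section Comparison

variable {u u' : ℝ → ℝ} {k α M t : ℝ}

lemma le_blowUpSolution_add {ε : ℝ} (hk : 0 < k) (hα : 0 < α) (hM : 0 < M) (hεt : ε < t)
    (hcont : ContinuousOn u (Icc ε t)) (hderiv : ∀ s ∈ Ioo ε t, HasDerivAt u (u' s) s)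
    (hdecay : ∀ s ∈ Ioo ε t, M ≤ u s → u' s ≤ -k * u s ^ (1 + α)) :
    u t ≤ blowUpSolution k α ε t + M := by
  have hstart : ∀ᶠ s in 𝓝[>] ε, s ∈ Ioo ε t ∧ u s ≤ blowUpSolution k α ε s + M := by
    have hu : ∀ᶠ s in 𝓝[>] ε, u s < u ε + 1 :=
      ((hcont ε (left_mem_Icc.2 hεt.le)).tendsto.mono_left
        (nhdsWithin_le_of_mem (Icc_mem_nhdsGT hεt))).eventually (eventually_lt_nhds (by linarith))
    filter_upwards [Ioo_mem_nhdsGT hεt, hu,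
      (tendsto_blowUpSolution_atTop hk hα).eventually_gt_atTop (u ε + 1)] with s hs hus hbs
    exact ⟨hs, by linarith⟩
  obtain ⟨s₁, hs₁, hus₁⟩ := hstart.exists
  have hsub : ∀ x ∈ Ico s₁ t, x ∈ Ioo ε t := fun x hx => ⟨hs₁.1.trans_le hx.1, hx.2⟩
  have hbarrier : ∀ x ∈ Ico s₁ t, HasDerivAt (fun s => blowUpSolution k α ε s + M)
      (-k * blowUpSolution k α ε x ^ (1 + α)) x := fun x hx =>
    (hasDerivAt_blowUpSolution hk hα (hsub x hx).1).add_const M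
  refine image_le_of_deriv_right_lt_deriv_boundary' (hcont.mono (Icc_subset_Icc_left hs₁.1.le))
    (fun x hx => (hderiv x (hsub x hx)).hasDerivWithinAt) hus₁ ?_
    (fun x hx => (hbarrier x hx).hasDerivWithinAt) ?_ (right_mem_Icc.2 hs₁.2.le)
  · intro x hx
    rcases hx.2.eq_or_lt with rfl | hxt
    · exact ((hasDerivAt_blowUpSolution hk hα hεt).add_const M).continuousAt.continuousWithinAt
    · exact (hbarrier x ⟨hx.1, hxt⟩).continuousAt.continuousWithinAt
  · intro x hx hux
    have hpos := blowUpSolution_pos hk hα (hsub x hx).1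
    -- `M > 0` is what makes the barrier strict.
    calc u' x ≤ -k * (blowUpSolution k α ε x + M) ^ (1 + α) :=
          hux ▸ hdecay x (hsub x hx) (by rw [hux]; linarith)
      _ < -k * blowUpSolution k α ε x ^ (1 + α) := by
          have := rpow_lt_rpow hpos.le (lt_add_of_pos_right _ hM) (by linarith : 0 < 1 + α)
          nlinarith

lemma le_rpow_neg_inv_add_of_decay (hk : 0 < k) (hα : 0 < α) (hM : 0 < M) (ht : 0 < t)
    (hderiv : ∀ s > 0, HasDerivAt u (u' s) s)
    (hdecay : ∀ s > 0, M ≤ u s → u' s ≤ -k * u s ^ (1 + α)) :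
    u t ≤ (k * α * t) ^ (-α⁻¹) + M := by
  have hbound : ∀ ε ∈ Ioo 0 t, u t ≤ blowUpSolution k α ε t + M := fun ε hε =>
    le_blowUpSolution_add hk hα hM hε.2
      (fun s hs => (hderiv s (hε.1.trans_le hs.1)).continuousAt.continuousWithinAt)
      (fun s hs => hderiv s (hε.1.trans hs.1)) (fun s hs => hdecay s (hε.1.trans hs.1))
  have hlim : Tendsto (fun ε => blowUpSolution k α ε t + M) (𝓝[>] 0)
      (𝓝 ((k * α * t) ^ (-α⁻¹) + M)) := by
    have hcont : ContinuousAt (fun ε => blowUpSolution k α ε t) 0 :=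
      ((continuous_const.mul (continuous_const.sub continuous_id)).continuousAt.rpow_const
        (Or.inl (by simpa using (by positivity : 0 < k * α * t).ne')))
    simpa [blowUpSolution] using (hcont.add_const M).tendsto.mono_left nhdsWithin_le_nhds
  exact ge_of_tendsto hlim (mem_of_superset (Ioo_mem_nhdsGT ht) hbound)

end Comparison

lemma le_mul_rpow_of_rpow_inv_le {a k γ x : ℝ} (ha : 0 < a) (hk : 0 ≤ k) (hγ : 0 < γ) (hx : 0 ≤ x)
    (h : (4 * k / a) ^ (1 / γ) ≤ x) : k ≤ a / 4 * x ^ γ := by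
  rw [one_div, rpow_inv_le_iff_of_pos (by positivity) hx hγ] at h
  have : k = a / 4 * (4 * k / a) := by field_simp
  rw [this]
  gcongr

lemma neg_mul_rpow_add_mul_add_mul_rpow_le {a b c α β x : ℝ} (ha : 0 < a) (hb : 0 ≤ b) (hc : 0 ≤ c) (hα : 0 < α)
    (hαβ : 0 < α + β) (hx : 0 < x) (h : (4 * b / a) ^ (1 / α) + (4 * c / a) ^ (1 / (α + β)) ≤ x) :
    -a * x ^ (1 + α) + b * x + c * x ^ (1 - β) ≤ -(a / 2) * x ^ (1 + α) := by
  have hb' := le_mul_rpow_of_rpow_inv_le ha hb hα hx.le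
    (le_of_add_le_of_nonneg_left h (by positivity))
  have hc' := le_mul_rpow_of_rpow_inv_le ha hc hαβ hx.le
    (le_of_add_le_of_nonneg_right h (by positivity))
  have hsplit₁ : x ^ (1 + α) = x * x ^ α := by rw [rpow_add hx, rpow_one]
  have hsplit₂ : x ^ (1 + α) = x ^ (1 - β) * x ^ (α + β) := by rw [← rpow_add hx]; ring_nf
  have := rpow_pos_of_pos hx (1 - β)
  nlinarith [mul_le_mul_of_nonneg_left hb' hx.le, mul_le_mul_of_nonneg_left hc' this.le]

theorem stmt12_general (u u' : ℝ → ℝ) (a b c α β : ℝ)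
    (ha : 0 < a) (hb : 0 < b) (hc : 0 < c) (hα : 0 < α) (hβ : 0 < β)
    (hderiv : ∀ t > (0:ℝ), HasDerivAt u (u' t) t)
    (hineq : ∀ t > (0:ℝ), u' t ≤ -a * u t ^ (1 + α) + b * u t + c * u t ^ (1 - β)) :
    ∀ t > (0:ℝ), u t ≤ (2 / (a * α * t)) ^ (1/α) + (4*b/a) ^ (1/α) + (4*c/a) ^ (1/(α+β)) := by
  intro t ht
  set M := (4 * b / a) ^ (1 / α) + (4 * c / a) ^ (1 / (α + β))
  have hM : 0 < M := by positivity
  have hdecay : ∀ s > 0, M ≤ u s → u' s ≤ -(a / 2) * u s ^ (1 + α) := fun s hs hMs =>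
    (hineq s hs).trans (neg_mul_rpow_add_mul_add_mul_rpow_le ha hb.le hc.le hα (by positivity) (hM.trans_le hMs) hMs)
  have hbound := le_rpow_neg_inv_add_of_decay (half_pos ha) hα hM ht hderiv hdecay
  have hrewrite : (a / 2 * α * t) ^ (-α⁻¹) = (2 / (a * α * t)) ^ (1 / α) := by
    rw [rpow_neg (by positivity), ← inv_rpow (by positivity), one_div]
    congr 1
    field_simp
  linarith

theorem stmt12 (u u' : ℝ → ℝ) (a b c α β : ℝ)
    (ha : 0 < a) (hb : 0 < b) (hc : 0 < c) (hα : 0 < α) (hβ : 0 < β)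
    (hpos : ∀ t > (0:ℝ), 0 < u t)
    (hderiv : ∀ t > (0:ℝ), HasDerivAt u (u' t) t)
    (hcont : ContinuousOn u' (Set.Ioi 0))
    (hineq : ∀ t > (0:ℝ), u' t ≤ -a * u t ^ (1 + α) + b * u t + c * u t ^ (1 - β)) :
    ∀ t > (0:ℝ), u t ≤ (2 / (a * α * t)) ^ (1/α) + (4*b/a) ^ (1/α) + (4*c/a) ^ (1/(α+β)) :=
  stmt12_general u u' a b c α β ha hb hc hα hβ hderiv hineq
end

section
/- For all nonzero x, x̃, and all v, ṽ, v*, ṽ* ∈ ℝ³ with x = v - v* and x̃ = ṽ - ṽ*: (v - ṽ)·(b(x) - b(x̃)) ≤ 2(|x|^γ + |x̃|^γ)|v - ṽ||v* - ṽ*|, where b(x) = -2|x|^γ x. -/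
open RealInnerProductSpace

/-! With x = v - vs, y = w - ws, a = v - w, c = vs - ws we have x - y = a - c. Let S and D be the
sum and the difference of ‖x‖^γ and ‖y‖^γ. Splitting
‖y‖^γ y - ‖x‖^γ x = -(S/2)(a - c) - (D/2)(x + y),
the first part pairs with a to at most (S/2)(‖a‖‖c‖ - ‖a‖²), the second to at most
(|D|/2)‖a‖(‖x‖ + ‖y‖) ≤ (S/2)‖a‖ |‖x‖ - ‖y‖| ≤ (S/2)‖a‖(‖a‖ + ‖c‖), using the elementary inequality
|s^γ - r^γ|(s + r) ≤ (s^γ + r^γ)|s - r| for γ ∈ [0, 1]. -/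

lemma mul_rpow_le_mul_rpow {γ r s : ℝ} (hγ : γ ≤ 1) (hr : 0 ≤ r)
    (hrs : r ≤ s) : r * s ^ γ ≤ s * r ^ γ := by
  have hs : 0 ≤ s := hr.trans hrs
  have split : ∀ t : ℝ, 0 ≤ t → t = t ^ (1 - γ) * t ^ γ := fun t ht => by
    rw [← Real.rpow_add' ht (by norm_num), sub_add_cancel, Real.rpow_one]
  calc r * s ^ γ = r ^ (1 - γ) * (r ^ γ * s ^ γ) := by nth_rw 1 [split r hr]; ring
    _ ≤ s ^ (1 - γ) * (r ^ γ * s ^ γ) := by gcongr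
    _ = s * r ^ γ := by nth_rw 3 [split s hs]; ring

lemma abs_rpow_sub_rpow_mul_le {γ r s : ℝ} (hγ0 : 0 ≤ γ) (hγ1 : γ ≤ 1) (hr : 0 ≤ r)
    (hs : 0 ≤ s) : |s ^ γ - r ^ γ| * (s + r) ≤ (s ^ γ + r ^ γ) * |s - r| := by
  wlog hrs : r ≤ s generalizing r s
  · rw [abs_sub_comm, add_comm s, add_comm (s ^ γ), abs_sub_comm s]
    exact this hs hr (le_of_not_ge hrs)
  have hpow : r ^ γ ≤ s ^ γ := Real.rpow_le_rpow hr hrs hγ0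
  rw [abs_of_nonneg (sub_nonneg.2 hpow), abs_of_nonneg (sub_nonneg.2 hrs)]
  nlinarith [mul_rpow_le_mul_rpow hγ1 hr hrs]

section InnerProductSpace

variable {E : Type*} [NormedAddCommGroup E] [InnerProductSpace ℝ E]

lemma inner_rpow_smul_sub_rpow_smul_le {γ : ℝ} (hγ0 : 0 ≤ γ) (hγ1 : γ ≤ 1) {x y a c : E}
    (h : x - y = a - c) :
    ⟪a, ‖y‖ ^ γ • y - ‖x‖ ^ γ • x⟫ ≤ (‖x‖ ^ γ + ‖y‖ ^ γ) * ‖a‖ * ‖c‖ := by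
  set S := ‖x‖ ^ γ + ‖y‖ ^ γ
  set D := ‖x‖ ^ γ - ‖y‖ ^ γ
  have hS : 0 ≤ S := by positivity
  have decomp : ‖y‖ ^ γ • y - ‖x‖ ^ γ • x = -(S / 2) • (a - c) - (D / 2) • (x + y) := by
    rw [← h]; module
  have hac : ⟪a, c⟫ ≤ ‖a‖ * ‖c‖ := real_inner_le_norm a c
  have hnorm : |‖x‖ - ‖y‖| ≤ ‖a‖ + ‖c‖ :=
    (abs_norm_sub_norm_le x y).trans (h ▸ norm_sub_le a c)
  have hD : -(D * ⟪a, x + y⟫) ≤ S * ‖a‖ * (‖a‖ + ‖c‖) :=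
    calc -(D * ⟪a, x + y⟫) ≤ |D| * (‖a‖ * (‖x‖ + ‖y‖)) := by
          refine (neg_le_abs _).trans ?_
          rw [abs_mul]
          gcongr
          exact (abs_real_inner_le_norm a _).trans (by gcongr; exact norm_add_le x y)
      _ = ‖a‖ * (|D| * (‖x‖ + ‖y‖)) := by ring
      _ ≤ ‖a‖ * (S * |‖x‖ - ‖y‖|) :=
          mul_le_mul_of_nonneg_left
            (abs_rpow_sub_rpow_mul_le hγ0 hγ1 (norm_nonneg y) (norm_nonneg x)) (norm_nonneg a)
      _ ≤ S * ‖a‖ * (‖a‖ + ‖c‖) := by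
          rw [mul_left_comm, mul_assoc]; gcongr
  rw [decomp, inner_sub_right, inner_smul_right, inner_smul_right, inner_sub_right,
    real_inner_self_eq_norm_sq]
  nlinarith [mul_le_mul_of_nonneg_left hac hS]

end InnerProductSpace

lemma norm3_eq_norm (z : Fin 3 → ℝ) :
    norm3 z = ‖(WithLp.toLp 2 z : EuclideanSpace ℝ (Fin 3))‖ := by
  rw [EuclideanSpace.norm_eq]
  simp [norm3, sq_abs]

lemma dot3_eq_inner (z y : Fin 3 → ℝ) : dot3 z y =
    ⟪(WithLp.toLp 2 z : EuclideanSpace ℝ (Fin 3)), WithLp.toLp 2 y⟫ := by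
  simp [dot3, PiLp.inner_apply, mul_comm]

theorem stmt17_general (γ : ℝ) (hγ : γ ∈ Set.Ioc (0:ℝ) 1)
    (v w vs ws : Fin 3 → ℝ) :
    dot3 (v - w) (bfun γ (v - vs) - bfun γ (w - ws))
      ≤ 2 * (norm3 (v - vs) ^ γ + norm3 (w - ws) ^ γ) * norm3 (v - w) * norm3 (vs - ws) := by
  have key := inner_rpow_smul_sub_rpow_smul_le hγ.1.le hγ.2
    (x := WithLp.toLp 2 (v - vs)) (y := WithLp.toLp 2 (w - ws))
    (a := WithLp.toLp 2 (v - w)) (c := WithLp.toLp 2 (vs - ws))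
    (by rw [← WithLp.toLp_sub, ← WithLp.toLp_sub]; congr 1; abel)
  simp only [dot3_eq_inner, bfun, norm3_eq_norm, WithLp.toLp_sub, WithLp.toLp_smul,
    inner_sub_right, inner_smul_right] at key ⊢
  linarith

theorem stmt17 (γ : ℝ) (hγ : γ ∈ Set.Ioc (0:ℝ) 1)
    (v w vs ws : Fin 3 → ℝ) (hx : v - vs ≠ 0) (hy : w - ws ≠ 0) :
    dot3 (v - w) (bfun γ (v - vs) - bfun γ (w - ws))
      ≤ 2 * (norm3 (v - vs) ^ γ + norm3 (w - ws) ^ γ) * norm3 (v - w) * norm3 (vs - ws) :=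
  stmt17_general γ hγ v w vs ws
end
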